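/- For every integer n ≥ 0, every integer k, every positive integer s, and every real x: E_{n,p,q}^{(k)}(x) = Σ_{l=0}^{n} binom(n,l) · S_2(l+s,s) · Σ_{i=0}^{n−l} (binom(n−l,i)/binom(l+s,s)) · 𝔅_i^{(s)}(x) · E_{n−l−i,p,q}^{(k)}, where E_{j,p,q}^{(k)} = E_{j,p,q}^{(k)}(0) are the (p,q)-poly-Euler numbers. -/

import Mathlib

open Finset

/-- The `(p,q)`-integer `[m]_{p,q} = (p^m - q^m)/(p - q)`. -/
noncomputable def pqInt (p q : ℝ) (m : ℕ) : ℝ := (p ^ m - q ^ m) / (p - q)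

/-- The exponential generating function `∑ f n * t^n / n!` of a sequence `f`. -/
noncomputable def egf (f : ℕ → ℝ) : PowerSeries ℝ :=
  PowerSeries.mk fun n => f n / n.factorial

/-- Formal substitution of a power series `S` with zero constant term into the
`(p,q)`-polylogarithm `Li_{k,p,q}(s) = ∑_{m ≥ 1} s^m / [m]_{p,q}^k`.
(For `m > n` the series `S^m` has zero `n`-th coefficient, so the sum is finite.) -/
noncomputable def pqLi (p q : ℝ) (k : ℤ) (S : PowerSeries ℝ) : PowerSeries ℝ :=
  PowerSeries.mk fun n =>
    ∑ m ∈ Finset.Icc 1 n, PowerSeries.coeff n (S ^ m) / pqInt p q m ^ k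

/-- Stirling numbers of the second kind: the number of partitions of an
`n`-element set into `m` nonempty blocks. -/
def stirling2 : ℕ → ℕ → ℕ
  | 0, 0 => 1
  | 0, _ + 1 => 0
  | _ + 1, 0 => 0
  | n + 1, m + 1 => (m + 1) * stirling2 n (m + 1) + stirling2 n m


/-!
The defining identity makes `E` an Appell sequence: `egf (E x) = egf (E 0) * e^{xt}`. The
Bernoulli identity of order `s` gives `e^{xt} = ((e^t - 1)/t)^s * egf (B x)`, and
`(e^t - 1)^s = s! * ∑ S₂(n, s) tⁿ/n!`, because differentiating `(e^t - 1)^{m+1}` reproduces the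
Stirling recurrence; hence `((e^t - 1)/t)^s` is the egf of `S₂(l + s, s) / C(l + s, s)`.
Multiplying the three exponential generating functions and comparing coefficients gives the formula.
-/

open PowerSeries

theorem stirling2_eq_stirlingSecond : ∀ n m : ℕ, stirling2 n m = Nat.stirlingSecond n m
  | 0, 0 | 0, _ + 1 | _ + 1, 0 => rfl
  | n + 1, m + 1 => by
    rw [stirling2, Nat.stirlingSecond_succ_succ, stirling2_eq_stirlingSecond n (m + 1),
      stirling2_eq_stirlingSecond n m]

@[simp]
theorem coeff_egf (f : ℕ → ℝ) (n : ℕ) : coeff n (egf f) = f n / n.factorial :=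
  coeff_mk _ _

theorem egf_injective : Function.Injective egf := fun f g h => funext fun n => by
  simpa [Nat.factorial_ne_zero] using congrArg (coeff n) h

theorem egf_mul (f g : ℕ → ℝ) :
    egf f * egf g = egf fun n => ∑ l ∈ range (n + 1), (n.choose l : ℝ) * f l * g (n - l) := by
  ext n
  rw [coeff_mul, Nat.sum_antidiagonal_eq_sum_range_succ_mk, coeff_egf, sum_div]
  refine sum_congr rfl fun l hl => ?_
  have hln : l ≤ n := Nat.lt_succ_iff.mp (mem_range.mp hl)
  have hchoose : (n.choose l : ℝ) ≠ 0 := Nat.cast_ne_zero.mpr (Nat.choose_pos hln).ne'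
  rw [coeff_egf, coeff_egf, ← Nat.choose_mul_factorial_mul_factorial hln]
  push_cast
  field_simp

theorem derivative_exp_sub_one_pow_succ {K : Type*} [Field K] [CharZero K] (m : ℕ) :
    d⁄dX K ((exp K - 1) ^ (m + 1)) =
      (m + 1 : K) • ((exp K - 1) ^ (m + 1) + (exp K - 1) ^ m) := by
  rw [Derivation.leibniz_pow, map_sub, derivative_exp, Derivation.map_one_eq_zero, sub_zero,
    Nat.add_sub_cancel, smul_eq_mul, pow_succ, ← Nat.cast_smul_eq_nsmul K]
  push_cast
  congr 1
  ring

theorem coeff_exp_sub_one_pow {K : Type*} [Field K] [CharZero K] (n s : ℕ) :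
    coeff n ((exp K - 1) ^ s) = (s.factorial * Nat.stirlingSecond n s / n.factorial : K) := by
  induction n generalizing s with
  | zero => rcases s with _ | m <;> simp [coeff_zero_eq_constantCoeff]
  | succ n ih =>
    rcases s with _ | m
    · simp
    · have h := congrArg (coeff n) (derivative_exp_sub_one_pow_succ (K := K) m)
      rw [coeff_derivative, map_smul, map_add, ih, ih, smul_eq_mul] at h
      rw [Nat.stirlingSecond_succ_succ, Nat.factorial_succ n, Nat.factorial_succ m] at *
      have hn : (n.factorial : K) ≠ 0 := Nat.cast_ne_zero.mpr n.factorial_ne_zero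
      push_cast at h ⊢
      field_simp at h ⊢
      linear_combination h

theorem exp_sub_one_pow_eq_X_pow_mul_egf (s : ℕ) :
    (exp ℝ - 1) ^ s =
      X ^ s * egf fun l => (Nat.stirlingSecond (l + s) s / (l + s).choose s : ℝ) := by
  ext n
  rw [coeff_exp_sub_one_pow, coeff_X_pow_mul']
  split_ifs with hsn
  · obtain ⟨l, rfl⟩ := Nat.exists_eq_add_of_le' hsn
    have hchoose : ((l + s).choose s : ℝ) ≠ 0 :=
      Nat.cast_ne_zero.mpr (Nat.choose_pos (Nat.le_add_left s l)).ne'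
    rw [Nat.add_sub_cancel, coeff_egf, ← Nat.choose_mul_factorial_mul_factorial
      (Nat.le_add_left s l), Nat.add_sub_cancel]
    push_cast
    field_simp
  · rw [Nat.stirlingSecond_eq_zero_of_lt (not_le.mp hsn)]
    simp

theorem egf_eq_egf_zero_mul_rescale_exp {F U : ℝ⟦X⟧} (hU : U ≠ 0) {E : ℝ → ℕ → ℝ}
    (hE : ∀ x, F * rescale x (exp ℝ) = U * egf (E x)) (x : ℝ) :
    egf (E x) = egf (E 0) * rescale x (exp ℝ) := by
  have hF : F = U * egf (E 0) := by simpa using hE 0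
  apply mul_left_cancel₀ hU
  rw [← hE x, hF, mul_assoc]

theorem pqPolyEuler_eq_sum_stirling2_bernoulli_higher_order_general
    (p q : ℝ) (k : ℤ)
    (E : ℝ → ℕ → ℝ)
    (hE : ∀ x : ℝ,
      2 * pqLi p q k (1 - PowerSeries.rescale (-1) (PowerSeries.exp ℝ)) *
          PowerSeries.rescale x (PowerSeries.exp ℝ) =
        (1 + PowerSeries.exp ℝ) * egf (E x))
    (s : ℕ)
    (B : ℝ → ℕ → ℝ)
    (hB : ∀ x : ℝ,
      (PowerSeries.X : PowerSeries ℝ) ^ s * PowerSeries.rescale x (PowerSeries.exp ℝ) =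
        (PowerSeries.exp ℝ - 1) ^ s * egf (B x)) :
    ∀ (n : ℕ) (x : ℝ),
      E x n =
        ∑ l ∈ Finset.range (n + 1),
          (n.choose l : ℝ) * (stirling2 (l + s) s : ℝ) *
            ∑ i ∈ Finset.range (n - l + 1),
              (((n - l).choose i : ℝ) / ((l + s).choose s : ℝ)) * B x i * E 0 (n - l - i) := by
  intro n x
  set c : ℕ → ℝ := fun l => Nat.stirlingSecond (l + s) s / (l + s).choose s
  have h1_add_exp : (1 + exp ℝ : ℝ⟦X⟧) ≠ 0 := fun h => by
    simpa using congrArg constantCoeff h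
  have hexp : rescale x (exp ℝ) = egf c * egf (B x) := by
    apply mul_left_cancel₀ (pow_ne_zero s X_ne_zero)
    rw [hB x, exp_sub_one_pow_eq_X_pow_mul_egf, mul_assoc]
  have hEx : egf (E x) = egf c * (egf (B x) * egf (E 0)) := by
    rw [egf_eq_egf_zero_mul_rescale_exp h1_add_exp hE x, hexp]
    ring
  rw [egf_mul, egf_mul] at hEx
  rw [congrFun (egf_injective hEx) n]
  refine sum_congr rfl fun l _ => ?_
  rw [stirling2_eq_stirlingSecond, mul_sum, mul_sum]
  refine sum_congr rfl fun i _ => ?_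
  ring

theorem pqPolyEuler_eq_sum_stirling2_bernoulli_higher_order
    (p q : ℝ) (hq : 0 < q) (hqp : q < p) (hp : p ≤ 1) (k : ℤ)
    (E : ℝ → ℕ → ℝ)
    (hE : ∀ x : ℝ,
      2 * pqLi p q k (1 - PowerSeries.rescale (-1) (PowerSeries.exp ℝ)) *
          PowerSeries.rescale x (PowerSeries.exp ℝ) =
        (1 + PowerSeries.exp ℝ) * egf (E x))
    (s : ℕ) (hs : 1 ≤ s)
    (B : ℝ → ℕ → ℝ)
    (hB : ∀ x : ℝ,
      (PowerSeries.X : PowerSeries ℝ) ^ s * PowerSeries.rescale x (PowerSeries.exp ℝ) =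
        (PowerSeries.exp ℝ - 1) ^ s * egf (B x)) :
    ∀ (n : ℕ) (x : ℝ),
      E x n =
        ∑ l ∈ Finset.range (n + 1),
          (n.choose l : ℝ) * (stirling2 (l + s) s : ℝ) *
            ∑ i ∈ Finset.range (n - l + 1),
              (((n - l).choose i : ℝ) / ((l + s).choose s : ℝ)) * B x i * E 0 (n - l - i) :=
  pqPolyEuler_eq_sum_stirling2_bernoulli_higher_order_general p q k E hE s B hB
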